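/- arXiv:1806.10074 — 5 statements merged into one kernel-verified Lean document; each statement's English description precedes it below -/
import Mathlib

section
/- Let Ω ⊆ ℝ² be a compact set, ρ a natural number, and P_1, …, P_ρ ⊆ ℝ² nonempty compact sets. Then the set of suitable solutions Γ = {(q_1, …, q_ρ) ∈ (ℝ²)^ρ : q_i + P_i ⊆ Ω for every i, and interior(q_i + P_i) ∩ interior(q_j + P_j) = ∅ for all i ≠ j} is a compact subset of (ℝ²)^ρ. -/
/-!
Containment in `Ω` is an intersection of closed conditions, and the interiors of `q i + P i`
and `q j + P j` are disjoint exactly when `q j - q i` avoids the open set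
`interior (P i) - interior (P j)`; so the configurations form a closed set. Fixing `p i ∈ P i`,
each `q i` lies in the compact set `Ω - p i`.
-/

open Set Pointwise

section TranslatedSets

variable {X G : Type*} [TopologicalSpace X] [TopologicalSpace G] [AddCommGroup G]
  [IsTopologicalAddGroup G]

omit [TopologicalSpace G] [IsTopologicalAddGroup G] in
theorem vadd_set_inter_vadd_set_eq_empty_iff (v w : G) (S T : Set G) :
    (v +ᵥ S) ∩ (w +ᵥ T) = ∅ ↔ w - v ∉ S - T := by
  rw [← not_nonempty_iff_eq_empty, not_iff_not]
  constructor
  · rintro ⟨_, ⟨a, ha, rfl⟩, ⟨b, hb, hab : w + b = v + a⟩⟩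
    exact ⟨a, ha, b, hb, sub_eq_sub_iff_add_eq_add.mpr (by rw [hab, add_comm])⟩
  · rintro ⟨a, ha, b, hb, hab : a - b = w - v⟩
    refine ⟨v + a, vadd_mem_vadd_set ha, b, hb, ?_⟩
    exact (sub_eq_sub_iff_add_eq_add.mp hab).symm.trans (add_comm a v)

theorem isClosed_setOf_vadd_subset {f : X → G} (hf : Continuous f) {Ω : Set G}
    (hΩ : IsClosed Ω) (S : Set G) : IsClosed {x | f x +ᵥ S ⊆ Ω} := by
  have hS : {x | f x +ᵥ S ⊆ Ω} = ⋂ p ∈ S, (fun x => f x + p) ⁻¹' Ω := by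
    ext x
    simp only [mem_ofPred_eq, mem_iInter, mem_preimage, ← image_vadd, subset_def,
      forall_mem_image, vadd_eq_add]
  rw [hS]
  exact isClosed_biInter fun p _ => hΩ.preimage (hf.add continuous_const)

theorem isClosed_setOf_interior_vadd_inter_eq_empty {f g : X → G} (hf : Continuous f)
    (hg : Continuous g) (S T : Set G) :
    IsClosed {x | interior (f x +ᵥ S) ∩ interior (g x +ᵥ T) = ∅} := by
  simp only [interior_vadd, vadd_set_inter_vadd_set_eq_empty_iff]
  exact isOpen_interior.sub_right.isClosed_compl.preimage (hg.sub hf)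

theorem isCompact_setOf_vadd_subset [T2Space G] {Ω S : Set G} (hΩ : IsCompact Ω)
    (hS : S.Nonempty) : IsCompact {v : G | v +ᵥ S ⊆ Ω} := by
  obtain ⟨p, hp⟩ := hS
  refine (hΩ.image (continuous_sub_right p)).of_isClosed_subset
    (isClosed_setOf_vadd_subset continuous_id hΩ.isClosed S) fun v hv => ?_
  exact ⟨v + p, hv (vadd_mem_vadd_set hp), add_sub_cancel_right v p⟩

end TranslatedSets

theorem suitable_solutions_compact_general
    (Ω : Set (EuclideanSpace ℝ (Fin 2))) (hΩ : IsCompact Ω)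
    (ρ : ℕ) (P : Fin ρ → Set (EuclideanSpace ℝ (Fin 2)))
    (hPne : ∀ i, (P i).Nonempty) :
    IsCompact {q : Fin ρ → EuclideanSpace ℝ (Fin 2) |
      (∀ i, (fun p => q i + p) '' P i ⊆ Ω) ∧
      ∀ i j, i ≠ j →
        interior ((fun p => q i + p) '' P i) ∩
          interior ((fun p => q j + p) '' P j) = ∅} := by
  simp only [← vadd_eq_add, image_vadd]
  refine (isCompact_univ_pi fun i => isCompact_setOf_vadd_subset hΩ (hPne i)).of_isClosed_subset
    ?_ fun q hq i _ => hq.1 i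
  simp only [ofPred_and, ofPred_forall]
  exact (isClosed_iInter fun i =>
      isClosed_setOf_vadd_subset (continuous_apply i) hΩ.isClosed (P i)).inter
    (isClosed_iInter fun i => isClosed_iInter fun j => isClosed_iInter fun _ =>
      isClosed_setOf_interior_vadd_inter_eq_empty (continuous_apply i) (continuous_apply j) _ _)

/-- For a compact `Ω ⊆ ℝ²` and nonempty compact sets `P_1, …, P_ρ ⊆ ℝ²`,
the set of suitable solutions
`Γ = {(q_1, …, q_ρ) | q_i + P_i ⊆ Ω for all i, and
      interior (q_i + P_i) ∩ interior (q_j + P_j) = ∅ for all i ≠ j}`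
is a compact subset of `(ℝ²)^ρ`. -/
theorem suitable_solutions_compact
    (Ω : Set (EuclideanSpace ℝ (Fin 2))) (hΩ : IsCompact Ω)
    (ρ : ℕ) (P : Fin ρ → Set (EuclideanSpace ℝ (Fin 2)))
    (hPc : ∀ i, IsCompact (P i)) (hPne : ∀ i, (P i).Nonempty) :
    IsCompact {q : Fin ρ → EuclideanSpace ℝ (Fin 2) |
      (∀ i, (fun p => q i + p) '' P i ⊆ Ω) ∧
      ∀ i j, i ≠ j →
        interior ((fun p => q i + p) '' P i) ∩
          interior ((fun p => q j + p) '' P j) = ∅} :=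
  suitable_solutions_compact_general Ω hΩ ρ P hPne
end

section
/- Let Ω' ⊆ ℝ² be a compact measurable set, let D : ℝ² → ℝ be a nonnegative integrable function, and let μ be the measure with density D with respect to the Lebesgue measure. Let c_1, …, c_ρ : ℝ² → ℝ be continuous functions such that for all i ≠ j the set {q ∈ Ω' : c_i(q) = c_j(q)} is μ-negligible. Define A_i = {q ∈ Ω' : c_i(q) < c_j(q) for all j ≠ i}. If B_1, …, B_ρ are pairwise disjoint measurable subsets of Ω' with μ(Ω' \ (B_1 ∪ … ∪ B_ρ)) = 0 and ∑_{i=1}^ρ ∫_{B_i} c_i dμ = ∑_{i=1}^ρ ∫_{A_i} c_i dμ, then μ(A_i Δ B_i) = 0 for every i, i.e., the minimizing partition is unique up to μ-negligible sets. -/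
open Set MeasureTheory Function
open scoped symmDiff

/-!
If `B` is any a.e. partition of `Ω'`, then splitting both costs along the common refinement
`B i ∩ A j` gives
`∑ i, ∫ in B i, c i - ∑ j, ∫ in A j, c j = ∑ i j, ∫ in B i ∩ A j, (c i - c j)`.
Every summand is nonnegative because `c j` is minimal on `A j`, so equal costs force all of
them to vanish; for `i ≠ j` the integrand is strictly positive on `B i ∩ A j`, hence that set
is null, and `A i`, `B i` can only differ on a null set.
-/

variable {α ι : Type*} {Ω : Set α} {c : ι → α → ℝ}

def strictMinRegion (Ω : Set α) (c : ι → α → ℝ) (i : ι) : Set α :=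
  {q ∈ Ω | ∀ j, j ≠ i → c i q < c j q}

lemma le_of_mem_strictMinRegion {i : ι} {q : α} (hq : q ∈ strictMinRegion Ω c i) (j : ι) :
    c i q ≤ c j q := by
  rcases eq_or_ne j i with rfl | hji
  · exact le_rfl
  · exact (hq.2 j hji).le

variable [MeasurableSpace α] {μ : Measure α}

structure IsAEPartition (μ : Measure α) (Ω : Set α) (P : ι → Set α) : Prop where
  measurableSet : ∀ i, MeasurableSet (P i)
  subset : ∀ i, P i ⊆ Ω
  pairwise_disjoint : Pairwise (Disjoint on P)
  measure_diff_iUnion : μ (Ω \ ⋃ i, P i) = 0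

lemma measure_eq_zero_of_setIntegral_eq_zero_of_pos {s : Set α} {f : α → ℝ}
    (hs : MeasurableSet s) (hf : IntegrableOn f s μ) (hpos : ∀ x ∈ s, 0 < f x)
    (h : ∫ x in s, f x ∂μ = 0) : μ s = 0 := by
  have hnonneg : 0 ≤ᵐ[μ.restrict s] f :=
    ae_restrict_of_forall_mem hs fun x hx => (hpos x hx).le
  have hsupp : support f ∩ s = s :=
    inter_eq_right.mpr fun x hx => (hpos x hx).ne'
  by_contra hμs
  have := (setIntegral_pos_iff_support_of_nonneg_ae hnonneg hf).mpr
    (by rw [hsupp]; exact pos_iff_ne_zero.mpr hμs)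
  exact this.ne' h

lemma measure_diff_eq_zero_of_measure_inter_eq_zero [Countable ι] {P : ι → Set α} {s : Set α}
    {i : ι}     (hcover : μ (Ω \ ⋃ j, P j) = 0) (hs : s ⊆ Ω) (h : ∀ j, j ≠ i → μ (s ∩ P j) = 0) :
    μ (s \ P i) = 0 := by
  refine measure_mono_null (t := (Ω \ ⋃ j, P j) ∪ ⋃ j, ⋃ (_ : j ≠ i), s ∩ P j) ?_
    (measure_union_null hcover (measure_iUnion_null fun j => measure_iUnion_null (h j)))
  rintro q ⟨hqs, hqi⟩
  by_cases hq : q ∈ ⋃ j, P j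
  · obtain ⟨j, hj⟩ := mem_iUnion.mp hq
    exact Or.inr (mem_iUnion₂.mpr ⟨j, fun hji => hqi (hji ▸ hj), hqs, hj⟩)
  · exact Or.inl ⟨hs hqs, hq⟩

namespace IsAEPartition

variable [Fintype ι] {P Q : ι → Set α}

lemma setIntegral_eq_sum_inter (hP : IsAEPartition μ Ω P) {t : Set α} {f : α → ℝ}
    (ht : MeasurableSet t) (htΩ : t ⊆ Ω) (hf : IntegrableOn f t μ) :
    ∫ x in t, f x ∂μ = ∑ i, ∫ x in t ∩ P i, f x ∂μ := by
  have hae : t =ᵐ[μ] ⋃ i, t ∩ P i := by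
    rw [← inter_iUnion, ae_eq_set, sdiff_self_inter]
    exact ⟨measure_mono_null (sdiff_subset_sdiff_left htΩ) hP.measure_diff_iUnion,
      by rw [sdiff_eq_empty.mpr inter_subset_left, measure_empty]⟩
  rw [setIntegral_congr_set hae]
  exact integral_iUnion_fintype (fun i => ht.inter (hP.measurableSet i))
    (fun i j hij => (hP.pairwise_disjoint hij).mono inter_subset_right inter_subset_right)
    (fun i => hf.mono_set inter_subset_left)

lemma sum_setIntegral_sub_sum_setIntegral (hP : IsAEPartition μ Ω P)
    (hQ : IsAEPartition μ Ω Q) (hc : ∀ i, IntegrableOn (c i) Ω μ) :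
    ∑ i, ∫ x in Q i, c i x ∂μ - ∑ j, ∫ x in P j, c j x ∂μ
      = ∑ i, ∑ j, ∫ x in Q i ∩ P j, (c i x - c j x) ∂μ := by
  have hint : ∀ i j k, IntegrableOn (c k) (Q i ∩ P j) μ :=
    fun i j k => (hc k).mono_set (inter_subset_left.trans (hQ.subset i))
  simp only [integral_sub (hint _ _ _) (hint _ _ _), Finset.sum_sub_distrib]
  congr 1
  · exact Finset.sum_congr rfl fun i _ =>
      hP.setIntegral_eq_sum_inter (hQ.measurableSet i) (hQ.subset i)
        ((hc i).mono_set (hQ.subset i))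
  · rw [Finset.sum_comm]
    refine Finset.sum_congr rfl fun j _ => ?_
    simp_rw [inter_comm (Q _) (P j)]
    exact hQ.setIntegral_eq_sum_inter (hP.measurableSet j) (hP.subset j)
      ((hc j).mono_set (hP.subset j))

lemma measure_symmDiff_eq_zero (hP : IsAEPartition μ Ω P) (hQ : IsAEPartition μ Ω Q)
    (h : ∀ i j, i ≠ j → μ (Q i ∩ P j) = 0) (i : ι) : μ (P i ∆ Q i) = 0 := by
  rw [symmDiff_def]
  refine measure_union_null ?_ ?_
  · refine measure_diff_eq_zero_of_measure_inter_eq_zero hQ.measure_diff_iUnion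
      (hP.subset i) fun j hji => ?_
    rw [inter_comm]
    exact h j i hji
  · exact measure_diff_eq_zero_of_measure_inter_eq_zero hP.measure_diff_iUnion
      (hQ.subset i) fun j hji => h i j hji.symm

end IsAEPartition

lemma isAEPartition_strictMinRegion [Fintype ι] [Nonempty ι] (hΩ : MeasurableSet Ω)
    (hc : ∀ i, Measurable (c i)) (hties : ∀ i j, i ≠ j → μ {q ∈ Ω | c i q = c j q} = 0) :
    IsAEPartition μ Ω (strictMinRegion Ω c) where
  measurableSet i := by
    have : strictMinRegion Ω c i = Ω ∩ ⋂ j, ⋂ (_ : j ≠ i), {q | c i q < c j q} := by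
      ext q; simp [strictMinRegion]
    rw [this]
    exact hΩ.inter (.iInter fun j => .iInter fun _ => measurableSet_lt (hc i) (hc j))
  subset _ _ hq := hq.1
  pairwise_disjoint i j hij := disjoint_left.mpr fun _ hqi hqj =>
    lt_asymm (hqi.2 j hij.symm) (hqj.2 i hij)
  measure_diff_iUnion := by
    -- a point of `Ω` in no region attains the minimum of the `c k q` at two indices
    refine measure_mono_null (t := ⋃ i, ⋃ j, ⋃ (_ : i ≠ j), {q ∈ Ω | c i q = c j q}) ?_
      (measure_iUnion_null fun i => measure_iUnion_null fun j => measure_iUnion_null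
        (hties i j))
    rintro q ⟨hqΩ, hq⟩
    obtain ⟨i, -, hi⟩ := Finset.exists_mem_eq_inf' Finset.univ_nonempty (fun k => c k q)
    have hmin : ∀ k, c i q ≤ c k q := fun k => hi ▸ Finset.inf'_le _ (Finset.mem_univ k)
    obtain ⟨j, hji, hj⟩ : ∃ j, j ≠ i ∧ c j q ≤ c i q := by
      by_contra! h
      exact hq (mem_iUnion.mpr ⟨i, hqΩ, h⟩)
    exact mem_iUnion₂.mpr ⟨i, j, mem_iUnion.mpr ⟨hji.symm, hqΩ, (hmin j).antisymm hj⟩⟩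

lemma IsAEPartition.measure_symmDiff_strictMinRegion_eq_zero [Fintype ι] [Nonempty ι]
    {B : ι → Set α} (hB : IsAEPartition μ Ω B) (hΩ : MeasurableSet Ω)
    (hc : ∀ i, Measurable (c i)) (hcΩ : ∀ i, IntegrableOn (c i) Ω μ)
    (hties : ∀ i j, i ≠ j → μ {q ∈ Ω | c i q = c j q} = 0)
    (hcost : ∑ i, ∫ q in B i, c i q ∂μ = ∑ i, ∫ q in strictMinRegion Ω c i, c i q ∂μ)
    (i : ι) : μ (strictMinRegion Ω c i ∆ B i) = 0 := by
  have hA := isAEPartition_strictMinRegion hΩ hc hties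
  have hmeas : ∀ i j, MeasurableSet (B i ∩ strictMinRegion Ω c j) :=
    fun i j => (hB.measurableSet i).inter (hA.measurableSet j)
  have hnonneg : ∀ i j, 0 ≤ ∫ q in B i ∩ strictMinRegion Ω c j, (c i q - c j q) ∂μ :=
    fun i j => setIntegral_nonneg (hmeas i j) fun q hq =>
      sub_nonneg.mpr (le_of_mem_strictMinRegion hq.2 i)
  have hterms : ∀ i j, ∫ q in B i ∩ strictMinRegion Ω c j, (c i q - c j q) ∂μ = 0 := by
    have hsum := hA.sum_setIntegral_sub_sum_setIntegral hB hcΩ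
    rw [hcost, sub_self, eq_comm] at hsum
    intro i j
    have hrow := (Finset.sum_eq_zero_iff_of_nonneg fun i _ =>
      Finset.sum_nonneg fun j _ => hnonneg i j).mp hsum i (Finset.mem_univ i)
    exact (Finset.sum_eq_zero_iff_of_nonneg fun j _ => hnonneg i j).mp hrow j
      (Finset.mem_univ j)
  refine hA.measure_symmDiff_eq_zero hB (fun i j hij => ?_) i
  refine measure_eq_zero_of_setIntegral_eq_zero_of_pos (hmeas i j) ?_
    (fun q hq => sub_pos.mpr (hq.2.2 i hij)) (hterms i j)
  exact ((hcΩ i).sub (hcΩ j)).mono_set (inter_subset_left.trans (hB.subset i))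

theorem strict_min_partition_unique_general
    (Ω' : Set (EuclideanSpace ℝ (Fin 2))) (hΩc : IsCompact Ω')
    (D : EuclideanSpace ℝ (Fin 2) → ℝ) (hDint : Integrable D)
    (μ : Measure (EuclideanSpace ℝ (Fin 2)))
    (hμ : μ = volume.withDensity (fun q => ENNReal.ofReal (D q)))
    (ρ : ℕ) (c : Fin ρ → EuclideanSpace ℝ (Fin 2) → ℝ)
    (hc : ∀ i, Continuous (c i))
    (hties : ∀ i j, i ≠ j → μ {q ∈ Ω' | c i q = c j q} = 0)
    (A : Fin ρ → Set (EuclideanSpace ℝ (Fin 2)))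
    (hA : ∀ i, A i = {q ∈ Ω' | ∀ j, j ≠ i → c i q < c j q})
    (B : Fin ρ → Set (EuclideanSpace ℝ (Fin 2)))
    (hBm : ∀ i, MeasurableSet (B i)) (hBsub : ∀ i, B i ⊆ Ω')
    (hBdisj : ∀ i j, i ≠ j → Disjoint (B i) (B j))
    (hBcover : μ (Ω' \ ⋃ i, B i) = 0)
    (hEq : ∑ i, ∫ q in B i, c i q ∂μ = ∑ i, ∫ q in A i, c i q ∂μ) :
    ∀ i, μ (symmDiff (A i) (B i)) = 0 := by
  intro i
  have : Nonempty (Fin ρ) := ⟨i⟩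
  have : IsFiniteMeasure μ := hμ ▸ isFiniteMeasure_withDensity_ofReal hDint.hasFiniteIntegral
  obtain rfl : A = strictMinRegion Ω' c := funext hA
  have hB : IsAEPartition μ Ω' B := ⟨hBm, hBsub, fun i j => hBdisj i j, hBcover⟩
  exact hB.measure_symmDiff_strictMinRegion_eq_zero hΩc.measurableSet
    (fun i => (hc i).measurable)
    (fun i => (hc i).continuousOn.integrableOn_compact hΩc) hties hEq i

/-- uniqueness of the minimizing partition for the lower-level
allocation problem LL(Q). Under the same hypotheses as the optimality statement,
any measurable partition `B` of `Ω'` (up to `μ`-negligible sets) whose total cost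
equals that of the strict-minimum partition `A` coincides with `A` up to
`μ`-negligible sets: `μ (A_i Δ B_i) = 0` for every `i`. -/
theorem strict_min_partition_unique
    (Ω' : Set (EuclideanSpace ℝ (Fin 2))) (hΩc : IsCompact Ω')
    (hΩm : MeasurableSet Ω')
    (D : EuclideanSpace ℝ (Fin 2) → ℝ) (hD0 : ∀ q, 0 ≤ D q) (hDint : Integrable D)
    (μ : Measure (EuclideanSpace ℝ (Fin 2)))
    (hμ : μ = volume.withDensity (fun q => ENNReal.ofReal (D q)))
    (ρ : ℕ) (c : Fin ρ → EuclideanSpace ℝ (Fin 2) → ℝ)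
    (hc : ∀ i, Continuous (c i))
    (hties : ∀ i j, i ≠ j → μ {q ∈ Ω' | c i q = c j q} = 0)
    (A : Fin ρ → Set (EuclideanSpace ℝ (Fin 2)))
    (hA : ∀ i, A i = {q ∈ Ω' | ∀ j, j ≠ i → c i q < c j q})
    (B : Fin ρ → Set (EuclideanSpace ℝ (Fin 2)))
    (hBm : ∀ i, MeasurableSet (B i)) (hBsub : ∀ i, B i ⊆ Ω')
    (hBdisj : ∀ i j, i ≠ j → Disjoint (B i) (B j))
    (hBcover : μ (Ω' \ ⋃ i, B i) = 0)
    (hEq : ∑ i, ∫ q in B i, c i q ∂μ = ∑ i, ∫ q in A i, c i q ∂μ) :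
    ∀ i, μ (symmDiff (A i) (B i)) = 0 :=
  strict_min_partition_unique_general Ω' hΩc D hDint μ hμ ρ c hc hties A hA B hBm hBsub hBdisj
    hBcover hEq
end

section
/- Let D : ℝ² → ℝ be an integrable function, ρ a natural number, and P_1, …, P_ρ ⊆ ℝ² compact sets. Then the map (v_1, …, v_ρ) ↦ ∫_{(v_1 + P_1) ∪ … ∪ (v_ρ + P_ρ)} D(q) dq (integral with respect to the Lebesgue measure over the union of the translates) is continuous on (ℝ²)^ρ. -/
open Set MeasureTheory Filter Topology
open scoped symmDiff ENNReal Pointwise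

/-!
A set integral of an integrable function depends continuously on the set for the pseudometric
`μ (s ∆ t)`, by absolute continuity of the integral. For a set of finite measure, translation is
continuous for this pseudometric (preimages under measure-preserving maps depend continuously on
the map in the compact-open topology), and the symmetric difference of two finite unions lies in the
union of the termwise symmetric differences.
-/

theorem tendsto_setIntegral_of_tendsto_measure_symmDiff {α ι E : Type*} [MeasurableSpace α]
    [NormedAddCommGroup E] [NormedSpace ℝ E] {μ : Measure α} {f : α → E} (hf : Integrable f μ)
    {l : Filter ι} {s : ι → Set α} {t : Set α} (hs : ∀ i, MeasurableSet (s i))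
    (ht : MeasurableSet t) (hst : Tendsto (fun i ↦ μ (s i ∆ t)) l (𝓝 0)) :
    Tendsto (fun i ↦ ∫ x in s i, f x ∂μ) l (𝓝 (∫ x in t, f x ∂μ)) := by
  have hle : ∀ i, edist (∫ x in s i, f x ∂μ) (∫ x in t, f x ∂μ) ≤ ∫⁻ x in s i ∆ t, ‖f x‖ₑ ∂μ := by
    intro i
    calc edist (∫ x in s i, f x ∂μ) (∫ x in t, f x ∂μ)
        = ‖∫ x, ((s i).indicator f x - t.indicator f x) ∂μ‖ₑ := by
          rw [edist_eq_enorm_sub, integral_sub (hf.indicator (hs i)) (hf.indicator ht),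
            integral_indicator (hs i), integral_indicator ht]
      _ ≤ ∫⁻ x, ‖(s i).indicator f x - t.indicator f x‖ₑ ∂μ :=
          enorm_integral_le_lintegral_enorm _
      _ = ∫⁻ x in s i ∆ t, ‖f x‖ₑ ∂μ := by
          simp_rw [← Set.apply_indicator_symmDiff enorm_neg, enorm_indicator_eq_indicator_enorm]
          exact lintegral_indicator ((hs i).symmDiff ht) _
  rw [tendsto_iff_edist_tendsto_0]
  exact tendsto_of_tendsto_of_tendsto_of_le_of_le tendsto_const_nhds
    (tendsto_setLIntegral_zero hf.2.ne hst) (fun _ ↦ zero_le) hle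

section Translation

variable {G : Type*} [AddGroup G] [TopologicalSpace G] [IsTopologicalAddGroup G]
  [MeasurableSpace G] [BorelSpace G] {μ : Measure G} [μ.IsAddLeftInvariant]
  [μ.InnerRegularCompactLTTop] [IsLocallyFiniteMeasure μ]

theorem tendsto_measure_vadd_symmDiff_vadd {s : Set G} (hs : NullMeasurableSet s μ)
    (hμs : μ s ≠ ∞) (v₀ : G) :
    Tendsto (fun v ↦ μ ((v +ᵥ s) ∆ (v₀ +ᵥ s))) (𝓝 v₀) (𝓝 0) := by
  let τ : G → C(G, G) := fun v ↦ ContinuousMap.addLeft (-v)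
  have hτ : Continuous τ :=
    ContinuousMap.continuous_of_continuous_uncurry _ (continuous_fst.neg.add continuous_snd)
  have hpre : ∀ v, τ v ⁻¹' s = v +ᵥ s := fun v ↦ by
    ext x; simp [τ, Set.mem_vadd_set_iff_neg_vadd_mem]
  simpa only [hpre] using tendsto_measure_symmDiff_preimage_nhds_zero (hτ.tendsto v₀)
    (.of_forall fun v ↦ measurePreserving_add_left μ (-v)) (measurePreserving_add_left μ (-v₀))
    hs hμs

theorem tendsto_measure_iUnion_vadd_symmDiff {ι : Type*} [Fintype ι] {s : ι → Set G}
    (hs : ∀ i, NullMeasurableSet (s i) μ) (hμs : ∀ i, μ (s i) ≠ ∞) (v₀ : ι → G) :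
    Tendsto (fun v : ι → G ↦ μ ((⋃ i, v i +ᵥ s i) ∆ (⋃ i, v₀ i +ᵥ s i))) (𝓝 v₀) (𝓝 0) := by
  have hsum : Tendsto (fun v : ι → G ↦ ∑ i, μ ((v i +ᵥ s i) ∆ (v₀ i +ᵥ s i))) (𝓝 v₀) (𝓝 0) := by
    simpa using tendsto_finsetSum Finset.univ fun i _ ↦
      (tendsto_measure_vadd_symmDiff_vadd (hs i) (hμs i) (v₀ i)).comp
        ((continuous_apply i).tendsto v₀)
  refine tendsto_of_tendsto_of_tendsto_of_le_of_le tendsto_const_nhds hsum (fun _ ↦ zero_le)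
    fun v ↦ ?_
  calc μ ((⋃ i, v i +ᵥ s i) ∆ (⋃ i, v₀ i +ᵥ s i))
      ≤ μ (⋃ i, (v i +ᵥ s i) ∆ (v₀ i +ᵥ s i)) := measure_mono iUnion_symmDiff_iUnion_subset
    _ ≤ ∑ i, μ ((v i +ᵥ s i) ∆ (v₀ i +ᵥ s i)) := measure_iUnion_fintype_le _ _

end Translation

/-- for an integrable `D : ℝ² → ℝ` and compact sets `P_1, …, P_ρ ⊆ ℝ²`,
the map `(v_1, …, v_ρ) ↦ ∫_{(v_1 + P_1) ∪ … ∪ (v_ρ + P_ρ)} D(q) dq` is continuous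
on `(ℝ²)^ρ`. -/
theorem lost_demand_integral_continuous
    (D : EuclideanSpace ℝ (Fin 2) → ℝ) (hD : Integrable D)
    (ρ : ℕ) (P : Fin ρ → Set (EuclideanSpace ℝ (Fin 2)))
    (hP : ∀ i, IsCompact (P i)) :
    Continuous (fun v : Fin ρ → EuclideanSpace ℝ (Fin 2) =>
      ∫ q in ⋃ i, (fun p => v i + p) '' P i, D q) := by
  have hPm : ∀ i, MeasurableSet (P i) := fun i ↦ (hP i).isClosed.measurableSet
  have hunion : ∀ v : Fin ρ → EuclideanSpace ℝ (Fin 2), MeasurableSet (⋃ i, v i +ᵥ P i) :=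
    fun v ↦ .iUnion fun i ↦ (hPm i).const_vadd (v i)
  simp only [← vadd_eq_add, Set.image_vadd]
  refine continuous_iff_continuousAt.2 fun v₀ ↦ ?_
  exact tendsto_setIntegral_of_tendsto_measure_symmDiff hD hunion (hunion v₀)
    (tendsto_measure_iUnion_vadd_symmDiff (fun i ↦ (hPm i).nullMeasurableSet)
      (fun i ↦ (hP i).measure_lt_top.ne) v₀)
end

section
/- Let Ω ⊆ ℝ² be a compact set and P_1, …, P_ρ ⊆ ℝ² nonempty compact sets whose topological frontiers are Lebesgue-negligible. Let u_1, …, u_ρ : ℝ² × ℝ² → ℝ be continuous functions, a_1, …, a_ρ ∈ ℝ, and D : ℝ² → ℝ a nonnegative integrable function. Assume that for every Q = (q_1, …, q_ρ) ∈ Γ and all i ≠ j the set {q ∈ Ω : a_i + u_i(q, q_i) = a_j + u_j(q, q_j)} is Lebesgue-negligible. Then for each i the map Q ↦ ∫_{Â_i(Q)} D(q) dq is continuous on Γ. -/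
open Set MeasureTheory Filter Topology

/-!
Fix a profile `Q₀` at which ties are negligible. Almost every `q` lies on no translated frontier
`Q₀ j + ∂P_j` (translations preserve Lebesgue measure) and, if `q ∈ Ω`, on no tie between the
cost of `i` and that of another facility. For such a `q`, being inside or outside each
`interior (Q j + P_j)` and each comparison of costs is preserved under small moves of `Q`, so
whether `q ∈ Â_i(Q)` is locally constant near `Q₀`. Dominated convergence with bound `‖D‖` then
gives continuity of `Q ↦ ∫_{Â_i(Q)} D` at `Q₀`.
-/

theorem eventually_mem_interior_iff_of_notMem_frontier {X : Type*} [TopologicalSpace X]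
    {s : Set X} {x : X} (hx : x ∉ frontier s) :
    ∀ᶠ y in 𝓝 x, (y ∈ interior s ↔ x ∈ interior s) := by
  by_cases hint : x ∈ interior s
  · filter_upwards [isOpen_interior.mem_nhds hint] with y hy
    simp only [hy, hint]
  · have hcl : x ∈ (closure s)ᶜ := fun hxcl => hx ⟨hxcl, hint⟩
    filter_upwards [isClosed_closure.isOpen_compl.mem_nhds hcl] with y hy
    simp only [hint, iff_false]
    exact fun hyint => hy (interior_subset_closure hyint)

theorem mem_interior_image_add_left_iff {G : Type*} [TopologicalSpace G] [AddGroup G]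
    [IsTopologicalAddGroup G] {s : Set G} {v x : G} :
    x ∈ interior ((fun p => v + p) '' s) ↔ -v + x ∈ interior s := by
  rw [image_add_left, ← Homeomorph.coe_addLeft, ← Homeomorph.preimage_interior]
  rfl

theorem Filter.Tendsto.eventually_lt_iff_of_ne {α γ : Type*} [TopologicalSpace α]
    [LinearOrder α] [OrderClosedTopology α] {l : Filter γ} {f g : γ → α} {y z : α}
    (hf : Tendsto f l (𝓝 y)) (hg : Tendsto g l (𝓝 z)) (hyz : y ≠ z) :
    ∀ᶠ x in l, (f x < g x ↔ y < z) := by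
  rcases hyz.lt_or_gt with hlt | hgt
  · filter_upwards [hf.eventually_lt hg hlt] with x hx
    simp only [hx, hlt]
  · filter_upwards [hg.eventually_lt hf hgt] with x hx
    simp only [hx.not_gt, hgt.not_gt]

theorem tendsto_setIntegral_of_ae_eventually_mem_iff {α ι E : Type*} [MeasurableSpace α]
    {μ : Measure α} [NormedAddCommGroup E] [NormedSpace ℝ E] {l : Filter ι}
    [l.IsCountablyGenerated] {f : α → E} (hf : Integrable f μ) {s : ι → Set α} {t : Set α}
    (hs : ∀ n, MeasurableSet (s n)) (ht : MeasurableSet t)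
    (hst : ∀ᵐ x ∂μ, ∀ᶠ n in l, (x ∈ s n ↔ x ∈ t)) :
    Tendsto (fun n => ∫ x in s n, f x ∂μ) l (𝓝 (∫ x in t, f x ∂μ)) := by
  simp only [← integral_indicator (hs _), ← integral_indicator ht]
  refine tendsto_integral_filter_of_dominated_convergence (fun x => ‖f x‖)
    (Eventually.of_forall fun n => hf.aestronglyMeasurable.indicator (hs n))
    (Eventually.of_forall fun n => Eventually.of_forall fun x => norm_indicator_le_norm_self f x)
    hf.norm ?_
  filter_upwards [hst] with x hx
  refine tendsto_const_nhds.congr' ?_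
  filter_upwards [hx] with n hn
  by_cases hxt : x ∈ t
  · rw [indicator_of_mem hxt, indicator_of_mem (hn.2 hxt)]
  · rw [indicator_of_notMem hxt, indicator_of_notMem (mt hn.1 hxt)]

section BestReply

variable {ι E : Type*} [Finite ι] [TopologicalSpace E] [AddGroup E]

/-- The best-reply cell `Â_i(Q)`, where `c j q y` is the total cost for a customer at `q` of
facility `j` placed at `y` (in the paper, `c j q y = a_j + u_j(q, y)`). -/
def bestReplyCell (Ω : Set E) (P : ι → Set E) (c : ι → E → E → ℝ) (i : ι) (Q : ι → E) :
    Set E :=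
  {q ∈ Ω \ ⋃ j, interior ((fun p => Q j + p) '' P j) | ∀ j, j ≠ i → c i q (Q i) < c j q (Q j)}

theorem measurableSet_bestReplyCell [MeasurableSpace E] [OpensMeasurableSpace E] {Ω : Set E}
    (hΩ : MeasurableSet Ω) (P : ι → Set E) {c : ι → E → E → ℝ}
    (hc : ∀ j y, Measurable fun q => c j q y) (i : ι) (Q : ι → E) :
    MeasurableSet (bestReplyCell Ω P c i Q) := by
  refine (hΩ.diff (isOpen_iUnion fun j => isOpen_interior).measurableSet).inter ?_
  refine measurableSet_setOfPred.2 (.forall fun j => measurable_const.imp ?_)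
  exact measurableSet_setOfPred.1 (measurableSet_lt (hc i (Q i)) (hc j (Q j)))

theorem eventually_mem_bestReplyCell_iff [IsTopologicalAddGroup E] {Ω : Set E}
    {P : ι → Set E} {c : ι → E → E → ℝ}
    (hc : ∀ j q, Continuous (c j q)) {i : ι} {Q₀ : ι → E} {q : E}
    (hfr : ∀ j, -Q₀ j + q ∉ frontier (P j))
    (hties : q ∈ Ω → ∀ j, j ≠ i → c i q (Q₀ i) ≠ c j q (Q₀ j)) :
    ∀ᶠ Q in 𝓝 Q₀, (q ∈ bestReplyCell Ω P c i Q ↔ q ∈ bestReplyCell Ω P c i Q₀) := by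
  by_cases hqΩ : q ∈ Ω
  swap
  · exact Eventually.of_forall fun Q => by simp [bestReplyCell, hqΩ]
  have hcost : ∀ j, Tendsto (fun Q : ι → E => c j q (Q j)) (𝓝 Q₀) (𝓝 (c j q (Q₀ j))) :=
    fun j => ((hc j q).tendsto _).comp (continuous_apply j).continuousAt
  have hobst : ∀ j, ∀ᶠ Q in 𝓝 Q₀, (q ∈ interior ((fun p => Q j + p) '' P j) ↔
      q ∈ interior ((fun p => Q₀ j + p) '' P j)) := by
    intro j
    have hmove : Tendsto (fun Q : ι → E => -Q j + q) (𝓝 Q₀) (𝓝 (-Q₀ j + q)) :=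
      ((continuous_apply j).neg.add continuous_const).tendsto Q₀
    filter_upwards [hmove.eventually (eventually_mem_interior_iff_of_notMem_frontier (hfr j))]
      with Q hQ
    simpa only [mem_interior_image_add_left_iff] using hQ
  have hcmp : ∀ j, ∀ᶠ Q in 𝓝 Q₀, (j ≠ i → c i q (Q i) < c j q (Q j)) ↔
      (j ≠ i → c i q (Q₀ i) < c j q (Q₀ j)) := by
    intro j
    by_cases hji : j = i
    · simp [hji]
    filter_upwards [(hcost i).eventually_lt_iff_of_ne (hcost j) (hties hqΩ j hji)] with Q hQ
    simp only [hQ]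
  filter_upwards [eventually_all.2 hobst, eventually_all.2 hcmp] with Q hQobst hQcmp
  simp only [bestReplyCell, mem_ofPred_eq, Set.mem_sdiff, mem_iUnion, not_exists, hQobst,
    forall_congr' hQcmp]

theorem continuousAt_setIntegral_bestReplyCell [IsTopologicalAddGroup E]
    [FirstCountableTopology E] [MeasurableSpace E] [OpensMeasurableSpace E]
    [MeasurableAdd E] {μ : Measure E} [μ.IsAddLeftInvariant]
    {Ω : Set E} (hΩ : MeasurableSet Ω) {P : ι → Set E} (hP : ∀ j, μ (frontier (P j)) = 0)
    {c : ι → E → E → ℝ} (hc₁ : ∀ j y, Measurable fun q => c j q y)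
    (hc₂ : ∀ j q, Continuous (c j q)) {D : E → ℝ} (hD : Integrable D μ) (i : ι) {Q₀ : ι → E}
    (hties : ∀ j, j ≠ i → μ {q ∈ Ω | c i q (Q₀ i) = c j q (Q₀ j)} = 0) :
    ContinuousAt (fun Q => ∫ q in bestReplyCell Ω P c i Q, D q ∂μ) Q₀ := by
  have hmeas := measurableSet_bestReplyCell hΩ P hc₁ i
  have hfr : ∀ᵐ q ∂μ, ∀ j, -Q₀ j + q ∉ frontier (P j) := by
    refine ae_all_iff.2 fun j => ?_
    exact measure_eq_zero_iff_ae_notMem.1 ((measure_preimage_add μ (-Q₀ j) _).trans (hP j))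
  have hnoTie : ∀ᵐ q ∂μ, q ∈ Ω → ∀ j, j ≠ i → c i q (Q₀ i) ≠ c j q (Q₀ j) := by
    have := ae_all_iff.2 fun j => ae_all_iff.2 fun hji : j ≠ i =>
      measure_eq_zero_iff_ae_notMem.1 (hties j hji)
    filter_upwards [this] with q hq hqΩ j hji htie
    exact hq j hji ⟨hqΩ, htie⟩
  refine tendsto_setIntegral_of_ae_eventually_mem_iff hD hmeas (hmeas Q₀) ?_
  filter_upwards [hfr, hnoTie] with q hqfr hqTie
  exact eventually_mem_bestReplyCell_iff hc₂ hqfr hqTie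

end BestReply

theorem best_reply_measure_continuousOn_general
    (ρ : ℕ) (Ω : Set (EuclideanSpace ℝ (Fin 2))) (hΩ : IsCompact Ω)
    (P : Fin ρ → Set (EuclideanSpace ℝ (Fin 2)))
    (hPfr : ∀ i, volume (frontier (P i)) = 0)
    (u : Fin ρ → EuclideanSpace ℝ (Fin 2) × EuclideanSpace ℝ (Fin 2) → ℝ)
    (hu : ∀ i, Continuous (u i))
    (a : Fin ρ → ℝ)
    (D : EuclideanSpace ℝ (Fin 2) → ℝ) (hD : Integrable D)
    (Γ : Set (Fin ρ → EuclideanSpace ℝ (Fin 2)))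
    (hties : ∀ Q ∈ Γ, ∀ i j, i ≠ j →
      volume {q ∈ Ω | a i + u i (q, Q i) = a j + u j (q, Q j)} = 0)
    (Ahat : Fin ρ → (Fin ρ → EuclideanSpace ℝ (Fin 2)) →
      Set (EuclideanSpace ℝ (Fin 2)))
    (hAhat : ∀ i Q, Ahat i Q =
      {q ∈ Ω \ ⋃ j, interior ((fun p => Q j + p) '' P j) |
        ∀ j, j ≠ i → a i + u i (q, Q i) < a j + u j (q, Q j)}) :
    ∀ i, ContinuousOn (fun Q => ∫ q in Ahat i Q, D q) Γ := by
  intro i Q hQ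
  have hcell : Ahat i = bestReplyCell Ω P (fun j q y => a j + u j (q, y)) i := funext (hAhat i)
  rw [hcell]
  exact (continuousAt_setIntegral_bestReplyCell hΩ.isClosed.measurableSet hPfr
    (fun j y => by fun_prop) (fun j q => by fun_prop) hD i
    fun j hji => hties Q hQ i j hji.symm).continuousWithinAt

/-- continuity on `Γ` of the congestion term `Q ↦ ∫_{Â_i(Q)} D(q) dq`,
where `Γ` is the set of suitable solutions,
`Ω(Q) = Ω \ ⋃ j interior (q_j + P_j)` and
`Â_i(Q) = {q ∈ Ω(Q) | a_i + u_i(q, q_i) < a_j + u_j(q, q_j) for all j ≠ i}`. -/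
theorem best_reply_measure_continuousOn
    (ρ : ℕ) (Ω : Set (EuclideanSpace ℝ (Fin 2))) (hΩ : IsCompact Ω)
    (P : Fin ρ → Set (EuclideanSpace ℝ (Fin 2)))
    (hPc : ∀ i, IsCompact (P i)) (hPne : ∀ i, (P i).Nonempty)
    (hPfr : ∀ i, volume (frontier (P i)) = 0)
    (u : Fin ρ → EuclideanSpace ℝ (Fin 2) × EuclideanSpace ℝ (Fin 2) → ℝ)
    (hu : ∀ i, Continuous (u i))
    (a : Fin ρ → ℝ)
    (D : EuclideanSpace ℝ (Fin 2) → ℝ) (hD0 : ∀ q, 0 ≤ D q) (hD : Integrable D)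
    (Γ : Set (Fin ρ → EuclideanSpace ℝ (Fin 2)))
    (hΓ : Γ = {Q | (∀ i, (fun p => Q i + p) '' P i ⊆ Ω) ∧
      ∀ i j, i ≠ j →
        interior ((fun p => Q i + p) '' P i) ∩
          interior ((fun p => Q j + p) '' P j) = ∅})
    (hties : ∀ Q ∈ Γ, ∀ i j, i ≠ j →
      volume {q ∈ Ω | a i + u i (q, Q i) = a j + u j (q, Q j)} = 0)
    (Ahat : Fin ρ → (Fin ρ → EuclideanSpace ℝ (Fin 2)) →
      Set (EuclideanSpace ℝ (Fin 2)))
    (hAhat : ∀ i Q, Ahat i Q =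
      {q ∈ Ω \ ⋃ j, interior ((fun p => Q j + p) '' P j) |
        ∀ j, j ≠ i → a i + u i (q, Q i) < a j + u j (q, Q j)}) :
    ∀ i, ContinuousOn (fun Q => ∫ q in Ahat i Q, D q) Γ :=
  best_reply_measure_continuousOn_general ρ Ω hΩ P hPfr u hu a D hD Γ hties Ahat hAhat
end

section
/- Let P ⊆ ℝ² be a compact set whose topological frontier is Lebesgue-negligible, and let B : ℝ² → ℝ be a nonnegative integrable function. For ε > 0 define the inner set P⁻(ε) = {q ∈ ℝ² : the closed ball of center q and radius ε is contained in P}. Then for every ξ > 0 there exists ε > 0 such that for every v ∈ ℝ², ∫_{(v + P) \ (v + P⁻(ε))} B(q) dq < ξ. -/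
/-!
As `ε ↓ 0` the sets `P \ P⁻(ε)` decrease to `P \ interior P ⊆ frontier P`, a null set, so their
measure tends to `0` because `P` has finite measure. By translation invariance of Lebesgue
measure the translated differences are equally small, uniformly in `v`, and absolute continuity
of the integral of `B` finishes the proof.
-/

open Set MeasureTheory Filter Topology

section InnerCore

variable {E : Type*}

/-- The inner set `P⁻(ε)`. -/
def innerCore [PseudoMetricSpace E] (P : Set E) (ε : ℝ) : Set E := {q | Metric.closedBall q ε ⊆ P}

theorem innerCore_anti [PseudoMetricSpace E] (P : Set E) : Antitone (innerCore P) :=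
  fun _ _ hεε' _ hq => (Metric.closedBall_subset_closedBall hεε').trans hq

theorem iUnion_innerCore [PseudoMetricSpace E] (P : Set E) :
    ⋃ ε > 0, innerCore P ε = interior P := by
  ext q
  simp only [mem_iUnion, exists_prop, mem_interior_iff_mem_nhds]
  exact Metric.nhds_basis_closedBall.mem_iff.symm

theorem innerCore_eq_biInter_preimage_add [SeminormedAddCommGroup E] (P : Set E) (ε : ℝ) :
    innerCore P ε = ⋂ x ∈ Metric.closedBall (0 : E) ε, (· + x) ⁻¹' P := by
  ext q
  simp only [innerCore, mem_ofPred_eq, mem_iInter, mem_preimage, subset_def, Metric.mem_closedBall,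
    dist_eq_norm, sub_zero]
  exact ⟨fun h x hx => h _ (by simpa using hx), fun h y hy => by simpa using h (y - q) hy⟩

theorem IsClosed.innerCore [SeminormedAddCommGroup E] {P : Set E} (hP : IsClosed P) (ε : ℝ) :
    IsClosed (innerCore P ε) := by
  rw [innerCore_eq_biInter_preimage_add]
  exact isClosed_biInter fun x _ => hP.preimage (continuous_add_const x)

theorem tendsto_measure_diff_innerCore [SeminormedAddCommGroup E] [MeasurableSpace E]
    [OpensMeasurableSpace E] {μ : Measure E} {P : Set E} (hP : IsClosed P) (hμP : μ P ≠ ⊤)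
    (hfr : μ (frontier P) = 0) :
    Tendsto (fun ε => μ (P \ innerCore P ε)) (𝓝[>] 0) (𝓝 0) := by
  have hlim := tendsto_measure_biInter_gt (μ := μ) (s := fun ε => P \ innerCore P ε) (a := (0 : ℝ))
    (fun ε _ => (hP.measurableSet.diff (hP.innerCore ε).measurableSet).nullMeasurableSet)
    (fun _ _ _ hεε' => sdiff_subset_sdiff_right (innerCore_anti P hεε'))
    ⟨1, one_pos, measure_ne_top_of_subset sdiff_subset hμP⟩
  have hcap : ⋂ ε > (0 : ℝ), P \ innerCore P ε ⊆ frontier P := by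
    intro q hq
    rw [mem_iInter₂] at hq
    refine ⟨subset_closure (hq 1 one_pos).1, fun hq_int => ?_⟩
    rw [← iUnion_innerCore, mem_iUnion₂] at hq_int
    obtain ⟨ε, hε, hq_core⟩ := hq_int
    exact (hq ε hε).2 hq_core
  rwa [measure_mono_null hcap hfr] at hlim

end InnerCore

theorem measure_image_add_left_diff {G : Type*} [AddGroup G] [MeasurableSpace G] [MeasurableAdd G]
    (μ : Measure G) [μ.IsAddLeftInvariant] (v : G) (A B : Set G) :
    μ ((v + ·) '' A \ (v + ·) '' B) = μ (A \ B) := by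
  rw [← image_sdiff (add_right_injective v), image_add_left, measure_preimage_add]

/-- Convergence along `comap Prod.fst (𝓝[>] 0)` is uniform in the translation vector. -/
theorem tendsto_setIntegral_image_add_diff_innerCore {E F : Type*} [SeminormedAddCommGroup E]
    [MeasurableSpace E] [OpensMeasurableSpace E] [MeasurableAdd E] {μ : Measure E}
    [μ.IsAddLeftInvariant] [NormedAddCommGroup F] [NormedSpace ℝ F] {f : E → F}
    (hf : Integrable f μ) {P : Set E} (hP : IsClosed P) (hμP : μ P ≠ ⊤)
    (hfr : μ (frontier P) = 0) :
    Tendsto (fun x : ℝ × E => ∫ q in (x.2 + ·) '' P \ (x.2 + ·) '' innerCore P x.1, f q ∂μ)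
      (comap Prod.fst (𝓝[>] 0)) (𝓝 0) := by
  refine hf.tendsto_setIntegral_nhds_zero ?_
  have hμ : μ ∘ (fun x : ℝ × E => (x.2 + ·) '' P \ (x.2 + ·) '' innerCore P x.1) =
      (fun ε => μ (P \ innerCore P ε)) ∘ Prod.fst :=
    funext fun x => measure_image_add_left_diff μ x.2 P _
  rw [hμ]
  exact (tendsto_measure_diff_innerCore hP hμP hfr).comp tendsto_comap

theorem inner_core_integral_small_general
    (P : Set (EuclideanSpace ℝ (Fin 2))) (hP : IsCompact P)
    (hfr : volume (frontier P) = 0)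
    (B : EuclideanSpace ℝ (Fin 2) → ℝ) (hB : Integrable B) :
    ∀ ξ : ℝ, 0 < ξ → ∃ ε : ℝ, 0 < ε ∧ ∀ v : EuclideanSpace ℝ (Fin 2),
      ∫ q in ((fun p => v + p) '' P) \
        ((fun p => v + p) '' {q | Metric.closedBall q ε ⊆ P}), B q < ξ := by
  intro ξ hξ
  have hsmall := (tendsto_setIntegral_image_add_diff_innerCore hB hP.isClosed
    hP.measure_lt_top.ne hfr).eventually (gt_mem_nhds hξ)
  rw [eventually_comap] at hsmall
  obtain ⟨ε, hε_small, hε⟩ := (hsmall.and self_mem_nhdsWithin).exists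
  exact ⟨ε, hε, fun v => hε_small (ε, v) rfl⟩

/-- inner uniform approximation estimate. For a compact `P ⊆ ℝ²` with
Lebesgue-negligible frontier and a nonnegative integrable `B : ℝ² → ℝ`, with
`P⁻(ε) = {q | closedBall q ε ⊆ P}`, for every `ξ > 0` there is `ε > 0` such that for
every `v ∈ ℝ²`, `∫_{(v + P) \ (v + P⁻(ε))} B(q) dq < ξ`. -/
theorem inner_core_integral_small
    (P : Set (EuclideanSpace ℝ (Fin 2))) (hP : IsCompact P)
    (hfr : volume (frontier P) = 0)
    (B : EuclideanSpace ℝ (Fin 2) → ℝ) (hB0 : ∀ q, 0 ≤ B q) (hB : Integrable B) :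
    ∀ ξ : ℝ, 0 < ξ → ∃ ε : ℝ, 0 < ε ∧ ∀ v : EuclideanSpace ℝ (Fin 2),
      ∫ q in ((fun p => v + p) '' P) \
        ((fun p => v + p) '' {q | Metric.closedBall q ε ⊆ P}), B q < ξ :=
  inner_core_integral_small_general P hP hfr B hB
end
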